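/- Let [W W_c] ∈ R^{n_s×n_s} be orthogonal, V ∈ R^{n_d×ℓ_d} with orthonormal columns, J̃_k = v_k ⊛ J, and let W_c^T [J̃_1 … J̃_{ℓ_d}] = Φ Ω Ψ^T be an SVD. Then Γ = [φ_1 … φ_s] maximizes ‖([W, W_c Γ̃]^T ⊗ V^T) J‖_F^2 over Γ̃ ∈ R^{(n_s−ℓ_s)×s} with orthonormal columns, and for any such Γ̃, ‖([W, W_c Γ̃]^T ⊗ V^T) J‖_F^2 = ‖W^T [J̃_1 … J̃_{ℓ_d}]‖_F^2 + ‖Γ̃^T W_c^T [J̃_1 … J̃_{ℓ_d}]‖_F^2. -/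

import Mathlib

open Matrix
open scoped BigOperators Kronecker

/-- Squared Frobenius norm of a real matrix. -/
def frobSq {α β : Type*} [Fintype α] [Fintype β] (A : Matrix α β ℝ) : ℝ :=
  ∑ i, ∑ j, A i j ^ 2

/-- For `v ∈ ℝ^{n_d}`, `v ⊛ J ∈ ℝ^{n_s × n_p}` has `(j,k)` entry `vᵀ J_{j,k}`. -/
def circStarOp {nd ns np : ℕ} (v : Fin nd → ℝ) (J : Matrix (Fin ns × Fin nd) (Fin np) ℝ) :
    Matrix (Fin ns) (Fin np) ℝ :=
  Matrix.of fun j k => ∑ i, v i * J (j, i) k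

/-- Rectangular "diagonal" matrix of singular values, the column index being a product
type enumerated by `finProdFinEquiv`. -/
def svDiagR (m : ℕ) (a b : ℕ) (ω : ℕ → ℝ) : Matrix (Fin m) (Fin a × Fin b) ℝ :=
  Matrix.of fun i q => if (i : ℕ) = ((finProdFinEquiv q : Fin (a * b)) : ℕ) then ω i else 0


/-! Up to a reindexing of entries, `([W, W_c Γ̃]ᵀ ⊗ Vᵀ) J` is the stacked matrix
`[W, W_c Γ̃]ᵀ [J̃_1 … J̃_{ℓ_d}]`, whose Frobenius norm splits over the two blocks of rows.
For the second block put `B = Γ̃ᵀ Φ`; it has orthonormal rows, so `BᵀB` is an orthogonal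
projection of rank `s` and `‖B Ω Ψᵀ‖_F² = ∑ᵢ ωᵢ² (BᵀB)ᵢᵢ` with diagonal weights in `[0, 1]`
summing to `s`. Such a weighted sum of decreasing `ωᵢ²` is largest when the weight sits on the
first `s` indices, which is exactly the weighting of `Γ = [φ_1 … φ_s]`, as `ΓᵀΦ = [I_s 0]`. -/

variable {ι κ μ : Type*} [Fintype ι]

lemma frobSq_eq_trace [Fintype κ] (A : Matrix ι κ ℝ) : frobSq A = trace (A * Aᵀ) := by
  simp [frobSq, trace, mul_apply, sq]

lemma frobSq_fromRows [Fintype κ] [Fintype μ] (A : Matrix ι μ ℝ) (B : Matrix κ μ ℝ) :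
    frobSq (fromRows A B) = frobSq A + frobSq B := by
  simp [frobSq, Fintype.sum_sum_type]

lemma frobSq_mul_transpose_of_transpose_mul_self [Fintype κ] [Fintype μ] [DecidableEq κ]
    (A : Matrix ι κ ℝ) (Q : Matrix μ κ ℝ) (hQ : Qᵀ * Q = 1) : frobSq (A * Qᵀ) = frobSq A := by
  rw [frobSq_eq_trace, frobSq_eq_trace, transpose_mul, transpose_transpose,
    Matrix.mul_assoc, ← Matrix.mul_assoc Qᵀ, hQ, Matrix.one_mul]

lemma trace_mul_diagonal_mul_transpose [Fintype κ] [DecidableEq κ] (B : Matrix ι κ ℝ)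
    (c : κ → ℝ) :
    trace (B * diagonal c * Bᵀ) = ∑ j, c j * (Bᵀ * B) j j := by
  rw [trace_mul_cycle, trace]
  simp [mul_comm]

lemma sum_mul_le_sum_mul_of_sum_eq (c d e : ι → ℝ) (t : ℝ) (hsum : ∑ i, d i = ∑ i, e i)
    (hcross : ∀ i, (c i - t) * (d i - e i) ≤ 0) :
    ∑ i, c i * d i ≤ ∑ i, c i * e i := by
  have key : ∑ i, c i * d i - ∑ i, c i * e i = ∑ i, (c i - t) * (d i - e i) := by
    simp only [sub_mul, mul_sub, Finset.sum_sub_distrib, ← Finset.mul_sum, hsum]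
    ring
  linarith [Finset.sum_nonpos fun i (_ : i ∈ Finset.univ) => hcross i]

lemma diag_transpose_mul_self_nonneg (B : Matrix ι κ ℝ) (j : κ) : 0 ≤ (Bᵀ * B) j j :=
  Finset.sum_nonneg fun i _ => mul_self_nonneg (B i j)

lemma diag_transpose_mul_self_le_one [Fintype κ] [DecidableEq ι] (B : Matrix ι κ ℝ)
    (hB : B * Bᵀ = 1) (j : κ) : (Bᵀ * B) j j ≤ 1 := by
  set P := Bᵀ * B
  have hPP : P * P = P := by
    rw [Matrix.mul_assoc, ← Matrix.mul_assoc B, hB, Matrix.one_mul]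
  have hsymm : Pᵀ = P := by simp [P, transpose_mul]
  have hsq : P j j ^ 2 ≤ P j j :=
    calc P j j ^ 2 ≤ ∑ i, P j i ^ 2 :=
          Finset.single_le_sum (fun i _ => sq_nonneg (P j i)) (Finset.mem_univ j)
      _ = (P * P) j j := by
          simp only [mul_apply, sq]
          exact Finset.sum_congr rfl fun i _ => by rw [← transpose_apply P i j, hsymm]
      _ = P j j := by rw [hPP]
  nlinarith [diag_transpose_mul_self_nonneg B j]

lemma sum_diag_transpose_mul_self [Fintype κ] [DecidableEq ι] (B : Matrix ι κ ℝ)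
    (hB : B * Bᵀ = 1) : ∑ j, (Bᵀ * B) j j = Fintype.card ι := by
  change trace (Bᵀ * B) = _
  rw [trace_mul_comm, hB, trace_one]

/-- `ωₙ²` for the `n`-th diagonal entry of `svDiagR m a b ω`, which is `0` beyond its `a * b`
columns. -/
def sqSingularValue (a b : ℕ) (ω : ℕ → ℝ) (n : ℕ) : ℝ := if n < a * b then ω n ^ 2 else 0

lemma sqSingularValue_antitone {a b : ℕ} {ω : ℕ → ℝ} (hω : Antitone ω) (hω0 : ∀ n, 0 ≤ ω n) :
    Antitone (sqSingularValue a b ω) := by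
  intro i j hij
  unfold sqSingularValue
  split_ifs with hj hi hi
  · exact pow_le_pow_left₀ (hω0 j) (hω hij) 2
  · omega
  · positivity
  · rfl

lemma svDiagR_mul_transpose (m a b : ℕ) (ω : ℕ → ℝ) :
    svDiagR m a b ω * (svDiagR m a b ω)ᵀ =
      diagonal fun i : Fin m => sqSingularValue a b ω i := by
  ext i i'
  have h := Fin.sum_univ_eq_sum_range
    (fun n => (if (i : ℕ) = n then ω i else 0) * (if (i' : ℕ) = n then ω i' else 0)) (a * b)
  rw [mul_apply, ← finProdFinEquiv.symm.sum_comp]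
  simp only [svDiagR, transpose_apply, of_apply, Equiv.apply_symm_apply] at h ⊢
  rw [h, diagonal_apply, sqSingularValue]
  simp only [ite_mul, zero_mul, mul_ite, mul_zero, Finset.sum_ite_eq, Finset.mem_range]
  by_cases hii' : i = i'
  · subst hii'; simp [sq]
  · simp [hii', Fin.val_ne_of_ne hii']

lemma frobSq_mul_svDiagR {m a b : ℕ} (B : Matrix ι (Fin m) ℝ) (ω : ℕ → ℝ) :
    frobSq (B * svDiagR m a b ω) = ∑ j : Fin m, sqSingularValue a b ω j * (Bᵀ * B) j j := by
  rw [frobSq_eq_trace, transpose_mul, Matrix.mul_assoc, ← Matrix.mul_assoc (svDiagR m a b ω),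
    svDiagR_mul_transpose, ← Matrix.mul_assoc, trace_mul_diagonal_mul_transpose]

lemma submatrix_castLE_transpose_mul {m s : ℕ} (hs : s ≤ m) (Φ : Matrix (Fin m) (Fin m) ℝ)
    (hΦ : Φᵀ * Φ = 1) :
    (Φ.submatrix id (Fin.castLE hs))ᵀ * Φ =
      (1 : Matrix (Fin m) (Fin m) ℝ).submatrix (Fin.castLE hs) id := by
  rw [transpose_submatrix, ← hΦ, submatrix_mul _ _ _ _ _ Function.bijective_id]
  rfl

lemma submatrix_castLE_transpose_mul_self {m s : ℕ} (hs : s ≤ m)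
    (Φ : Matrix (Fin m) (Fin m) ℝ) (hΦ : Φᵀ * Φ = 1) :
    (Φ.submatrix id (Fin.castLE hs))ᵀ * Φ.submatrix id (Fin.castLE hs) = 1 := by
  rw [transpose_submatrix, ← submatrix_mul _ _ _ _ _ Function.bijective_id, hΦ,
    submatrix_one _ (Fin.castLE_injective hs)]

lemma diag_one_submatrix_castLE {m s : ℕ} (hs : s ≤ m) (j : Fin m) :
    (((1 : Matrix (Fin m) (Fin m) ℝ).submatrix (Fin.castLE hs) id)ᵀ *
      (1 : Matrix (Fin m) (Fin m) ℝ).submatrix (Fin.castLE hs) id) j j =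
      if (j : ℕ) < s then 1 else 0 := by
  simp only [mul_apply, transpose_apply, submatrix_apply, id, one_apply, mul_ite, mul_one,
    mul_zero]
  split_ifs with hj
  · rw [Fintype.sum_eq_single ⟨j, hj⟩ fun r hr => ?_]
    · simp
    · simp [Fin.ext_iff, Fin.val_ne_of_ne hr]
  · exact Finset.sum_eq_zero fun r _ => by simp [Fin.ext_iff, show (r : ℕ) ≠ j by omega]

theorem frobSq_transpose_mul_le_of_svd {m a b s : ℕ} (hs : s ≤ m)
    {Φ : Matrix (Fin m) (Fin m) ℝ} {Ψ : Matrix (Fin a × Fin b) (Fin a × Fin b) ℝ} {ω : ℕ → ℝ}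
    (hΦ : Φᵀ * Φ = 1) (hΨ : Ψᵀ * Ψ = 1) (hω : Antitone ω) (hω0 : ∀ n, 0 ≤ ω n)
    {X : Matrix (Fin m) (Fin a × Fin b) ℝ} (hX : X = Φ * svDiagR m a b ω * Ψᵀ)
    (Γt : Matrix (Fin m) (Fin s) ℝ) (hΓt : Γtᵀ * Γt = 1) :
    frobSq (Γtᵀ * X) ≤ frobSq ((Φ.submatrix id (Fin.castLE hs))ᵀ * X) := by
  have hval (Γ : Matrix (Fin m) (Fin s) ℝ) : frobSq (Γᵀ * X) =
      ∑ j : Fin m, sqSingularValue a b ω j * ((Γᵀ * Φ)ᵀ * (Γᵀ * Φ)) j j := by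
    rw [hX, ← Matrix.mul_assoc, ← Matrix.mul_assoc,
      frobSq_mul_transpose_of_transpose_mul_self _ _ hΨ, frobSq_mul_svDiagR]
  have hrows (Γ : Matrix (Fin m) (Fin s) ℝ) (hΓ : Γᵀ * Γ = 1) :
      (Γᵀ * Φ) * (Γᵀ * Φ)ᵀ = 1 := by
    rw [transpose_mul, transpose_transpose, Matrix.mul_assoc, ← Matrix.mul_assoc Φ,
      mul_eq_one_comm.mp hΦ, Matrix.one_mul, hΓ]
  have hrowsΓ := hrows _ (submatrix_castLE_transpose_mul_self hs Φ hΦ)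
  have hsum := (sum_diag_transpose_mul_self _ (hrows Γt hΓt)).trans
    (sum_diag_transpose_mul_self _ hrowsΓ).symm
  rw [submatrix_castLE_transpose_mul hs Φ hΦ] at hsum
  rw [hval, hval, submatrix_castLE_transpose_mul hs Φ hΦ]
  -- Threshold `t = ω_s²`: the weights of `Γ` are `1` below index `s` and `0` from `s` on.
  refine sum_mul_le_sum_mul_of_sum_eq _ _ _ (sqSingularValue a b ω s) hsum fun j => ?_
  have hanti := sqSingularValue_antitone (a := a) (b := b) hω hω0
  rw [diag_one_submatrix_castLE]
  split_ifs with hj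
  · exact mul_nonpos_of_nonneg_of_nonpos (sub_nonneg.2 (hanti hj.le))
      (sub_nonpos.2 (diag_transpose_mul_self_le_one _ (hrows Γt hΓt) j))
  · exact mul_nonpos_of_nonpos_of_nonneg (sub_nonpos.2 (hanti (not_lt.1 hj)))
      (by simpa using diag_transpose_mul_self_nonneg (Γtᵀ * Φ) j)

/-- The matrix `[J̃_1 … J̃_{ℓ_d}]`, `J̃_b = v_b ⊛ J`, with column `(b, k)` the `k`-th column
of `J̃_b`. -/
def circStarBlock {nd ns np ld : ℕ} (V : Matrix (Fin nd) (Fin ld) ℝ)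
    (J : Matrix (Fin ns × Fin nd) (Fin np) ℝ) : Matrix (Fin ns) (Fin ld × Fin np) ℝ :=
  of fun j q => circStarOp (fun i => V i q.1) J j q.2

lemma kronecker_transpose_mul_apply {nd ns np ld : ℕ} {σ : Type*} (A : Matrix (Fin ns) σ ℝ)
    (V : Matrix (Fin nd) (Fin ld) ℝ) (J : Matrix (Fin ns × Fin nd) (Fin np) ℝ)
    (r : σ) (b : Fin ld) (k : Fin np) :
    ((Aᵀ ⊗ₖ Vᵀ) * J) (r, b) k = (Aᵀ * circStarBlock V J) r (b, k) := by
  simp only [mul_apply, kroneckerMap_apply, transpose_apply, circStarBlock, circStarOp,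
    of_apply, Fintype.sum_prod_type, Finset.mul_sum, mul_assoc]

lemma frobSq_kronecker_transpose_mul {nd ns np ld : ℕ} {σ : Type*} [Fintype σ]
    (A : Matrix (Fin ns) σ ℝ) (V : Matrix (Fin nd) (Fin ld) ℝ)
    (J : Matrix (Fin ns × Fin nd) (Fin np) ℝ) :
    frobSq ((Aᵀ ⊗ₖ Vᵀ) * J) = frobSq (Aᵀ * circStarBlock V J) := by
  simp only [frobSq, Fintype.sum_prod_type, kronecker_transpose_mul_apply]

lemma frobSq_fromCols_kronecker_mul {nd ns np ld ls m s : ℕ}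
    (J : Matrix (Fin ns × Fin nd) (Fin np) ℝ) (V : Matrix (Fin nd) (Fin ld) ℝ)
    (W : Matrix (Fin ns) (Fin ls) ℝ) (Wc : Matrix (Fin ns) (Fin m) ℝ) (Γt : Matrix (Fin m) (Fin s) ℝ) :
    frobSq (((fromCols W (Wc * Γt))ᵀ ⊗ₖ Vᵀ) * J) =
      frobSq (Wᵀ * circStarBlock V J) + frobSq (Γtᵀ * Wcᵀ * circStarBlock V J) := by
  rw [frobSq_kronecker_transpose_mul, transpose_fromCols, fromRows_mul, frobSq_fromRows,
    transpose_mul]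

theorem adding_sources_optimal_and_split_general
    (nd ns np ls ld s : ℕ) (hs : s ≤ ns - ls)
    (J : Matrix (Fin ns × Fin nd) (Fin np) ℝ)
    (V : Matrix (Fin nd) (Fin ld) ℝ)
    (W : Matrix (Fin ns) (Fin ls) ℝ) (Wc : Matrix (Fin ns) (Fin (ns - ls)) ℝ)
    (Φ : Matrix (Fin (ns - ls)) (Fin (ns - ls)) ℝ)
    (Ψ : Matrix (Fin ld × Fin np) (Fin ld × Fin np) ℝ) (ω : ℕ → ℝ)
    (hΦ : Φᵀ * Φ = 1) (hΨ : Ψᵀ * Ψ = 1)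
    (hword : ∀ i j : ℕ, i ≤ j → ω j ≤ ω i) (hw0 : ∀ i, 0 ≤ ω i)
    (hSVD : Wcᵀ * (Matrix.of fun j (q : Fin ld × Fin np) => circStarOp (fun i => V i q.1) J j q.2)
      = Φ * svDiagR (ns - ls) ld np ω * Ψᵀ) :
    IsGreatest
      {x : ℝ | ∃ Γt : Matrix (Fin (ns - ls)) (Fin s) ℝ, Γtᵀ * Γt = 1 ∧
        x = frobSq (((Matrix.fromCols W (Wc * Γt))ᵀ ⊗ₖ Vᵀ) * J)}
      (frobSq (((Matrix.fromCols W (Wc * Φ.submatrix id (Fin.castLE hs)))ᵀ ⊗ₖ Vᵀ) * J)) ∧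
    ∀ Γt : Matrix (Fin (ns - ls)) (Fin s) ℝ, Γtᵀ * Γt = 1 →
      frobSq (((Matrix.fromCols W (Wc * Γt))ᵀ ⊗ₖ Vᵀ) * J)
        = frobSq (Wᵀ *
            Matrix.of fun j (q : Fin ld × Fin np) => circStarOp (fun i => V i q.1) J j q.2)
          + frobSq (Γtᵀ * Wcᵀ *
            Matrix.of fun j (q : Fin ld × Fin np) => circStarOp (fun i => V i q.1) J j q.2) := by
  have split := frobSq_fromCols_kronecker_mul (s := s) J V W Wc
  refine ⟨⟨⟨_, submatrix_castLE_transpose_mul_self hs Φ hΦ, rfl⟩, ?_⟩, fun Γt _ => split Γt⟩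
  rintro _ ⟨Γt, hΓt, rfl⟩
  rw [split, split, Matrix.mul_assoc, Matrix.mul_assoc]
  gcongr
  exact frobSq_transpose_mul_le_of_svd hs hΦ hΨ hword hw0 hSVD Γt hΓt

/-- Let `[W W_c]` be orthogonal, `V` have orthonormal columns, `J̃_b = v_b ⊛ J`, and let
`W_cᵀ [J̃_1 … J̃_{ℓ_d}] = Φ Ω Ψᵀ` be an SVD with decreasing singular values.  Then
`Γ = [φ_1 … φ_s]` maximizes `‖([W, W_c Γ̃]ᵀ ⊗ Vᵀ) J‖_F²` over all
`Γ̃ ∈ ℝ^{(n_s - ℓ_s) × s}` with orthonormal columns, and for any such `Γ̃`,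
`‖([W, W_c Γ̃]ᵀ ⊗ Vᵀ) J‖_F² = ‖Wᵀ [J̃_1 … J̃_{ℓ_d}]‖_F² + ‖Γ̃ᵀ W_cᵀ [J̃_1 … J̃_{ℓ_d}]‖_F²`. -/
theorem adding_sources_optimal_and_split
    (nd ns np ls ld s : ℕ) (hs : s ≤ ns - ls)
    (J : Matrix (Fin ns × Fin nd) (Fin np) ℝ)
    (V : Matrix (Fin nd) (Fin ld) ℝ) (hV : Vᵀ * V = 1)
    (W : Matrix (Fin ns) (Fin ls) ℝ) (Wc : Matrix (Fin ns) (Fin (ns - ls)) ℝ)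
    (hWWc : (Matrix.fromCols W Wc)ᵀ * Matrix.fromCols W Wc = 1)
    (Φ : Matrix (Fin (ns - ls)) (Fin (ns - ls)) ℝ)
    (Ψ : Matrix (Fin ld × Fin np) (Fin ld × Fin np) ℝ) (ω : ℕ → ℝ)
    (hΦ : Φᵀ * Φ = 1) (hΨ : Ψᵀ * Ψ = 1)
    (hword : ∀ i j : ℕ, i ≤ j → ω j ≤ ω i) (hw0 : ∀ i, 0 ≤ ω i)
    (hSVD : Wcᵀ * (Matrix.of fun j (q : Fin ld × Fin np) => circStarOp (fun i => V i q.1) J j q.2)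
      = Φ * svDiagR (ns - ls) ld np ω * Ψᵀ) :
    IsGreatest
      {x : ℝ | ∃ Γt : Matrix (Fin (ns - ls)) (Fin s) ℝ, Γtᵀ * Γt = 1 ∧
        x = frobSq (((Matrix.fromCols W (Wc * Γt))ᵀ ⊗ₖ Vᵀ) * J)}
      (frobSq (((Matrix.fromCols W (Wc * Φ.submatrix id (Fin.castLE hs)))ᵀ ⊗ₖ Vᵀ) * J)) ∧
    ∀ Γt : Matrix (Fin (ns - ls)) (Fin s) ℝ, Γtᵀ * Γt = 1 →
      frobSq (((Matrix.fromCols W (Wc * Γt))ᵀ ⊗ₖ Vᵀ) * J)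
        = frobSq (Wᵀ *
            Matrix.of fun j (q : Fin ld × Fin np) => circStarOp (fun i => V i q.1) J j q.2)
          + frobSq (Γtᵀ * Wcᵀ *
            Matrix.of fun j (q : Fin ld × Fin np) => circStarOp (fun i => V i q.1) J j q.2) :=
  adding_sources_optimal_and_split_general nd ns np ls ld s hs J V W Wc Φ Ψ ω hΦ hΨ hword hw0 hSVD
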